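/- arXiv:2307.01618 — 2 statements merged into one kernel-verified Lean document; each statement's English description precedes it below -/
import Mathlib

section
/- For a finite index set K of regions with positive weights p_k and positive rates δ_k, and budget B > Σ_{k∈K} δ_k, the maximum of Σ_{k∈K} p_k (1 - δ_k/γ_k) over vectors γ with γ_k ≥ δ_k for all k and Σ_k γ_k ≤ B is attained at γ_k* = √(p_k δ_k) · B / Σ_{ℓ∈K} √(p_ℓ δ_ℓ), provided that γ_k* ≥ δ_k for all k. -/
/-!
Writing `a k = p k * δ k`, the objective equals `∑ p - ∑ a k / γ k`, so it suffices to
minimise the loss `∑ a k / γ k`. By Sedrakyan's form of Cauchy–Schwarz this loss is at least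
`(∑ √a)² / ∑ γ ≥ (∑ √a)² / B`, and the allocation proportional to `√a` that spends the
whole budget attains exactly this value.
-/

open Finset

namespace BudgetAllocation

variable {ι : Type*} (s : Finset ι)

theorem sum_mul_div_sum_le (w : ι → ℝ) {B : ℝ} (hB : 0 ≤ B) :
    ∑ k ∈ s, w k * B / ∑ ℓ ∈ s, w ℓ ≤ B := by
  rw [← sum_div, ← sum_mul]
  rcases eq_or_ne (∑ ℓ ∈ s, w ℓ) 0 with hw | hw
  · simpa [hw] using hB
  · rw [mul_div_cancel_left₀ _ hw]

-- Unconditional: `x / √x = √x` holds for every real `x`, and `/ 0` gives `0` on both sides.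
theorem sum_div_sqrt_mul_div (a : ι → ℝ) (B : ℝ) :
    ∑ k ∈ s, a k / (√(a k) * B / ∑ ℓ ∈ s, √(a ℓ)) = (∑ ℓ ∈ s, √(a ℓ)) ^ 2 / B := by
  have hterm : ∀ k ∈ s,
      a k / (√(a k) * B / ∑ ℓ ∈ s, √(a ℓ)) = √(a k) * (∑ ℓ ∈ s, √(a ℓ)) / B := fun k _ => by
    rw [div_div_eq_mul_div, mul_div_mul_comm, Real.div_sqrt, mul_div_assoc]
  rw [sum_congr rfl hterm, ← sum_div, ← sum_mul, sq]

theorem sq_sum_sqrt_div_le_sum_div (a : ι → ℝ) (ha : ∀ k ∈ s, 0 ≤ a k) {γ : ι → ℝ}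
    (hγ : ∀ k ∈ s, 0 < γ k) {B : ℝ} (hγB : ∑ k ∈ s, γ k ≤ B) :
    (∑ k ∈ s, √(a k)) ^ 2 / B ≤ ∑ k ∈ s, a k / γ k := by
  rcases s.eq_empty_or_nonempty with rfl | hs
  · simp
  calc (∑ k ∈ s, √(a k)) ^ 2 / B
      ≤ (∑ k ∈ s, √(a k)) ^ 2 / ∑ k ∈ s, γ k :=
        div_le_div_of_nonneg_left (sq_nonneg _) (sum_pos hγ hs) hγB
    _ ≤ ∑ k ∈ s, √(a k) ^ 2 / γ k := sq_sum_div_le_sum_sq_div s _ hγ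
    _ = ∑ k ∈ s, a k / γ k :=
        sum_congr rfl fun k hk => by rw [Real.sq_sqrt (ha k hk)]

end BudgetAllocation

open BudgetAllocation in
theorem stmt_0_general {K : Type*} [Fintype K] (p δ : K → ℝ) (B : ℝ)
    (hp : ∀ k, 0 < p k) (hδ : ∀ k, 0 < δ k)
    (hB : ∑ k, δ k < B)
    (γstar : K → ℝ)
    (hγstar : ∀ k, γstar k = Real.sqrt (p k * δ k) * B / ∑ ℓ, Real.sqrt (p ℓ * δ ℓ)) :
    (∑ k, γstar k ≤ B) ∧
    ∀ γ : K → ℝ, (∀ k, δ k ≤ γ k) → (∑ k, γ k ≤ B) →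
      ∑ k, p k * (1 - δ k / γ k) ≤ ∑ k, p k * (1 - δ k / γstar k) := by
  have hpδ : ∀ k ∈ univ, 0 ≤ p k * δ k := fun k _ => (mul_pos (hp k) (hδ k)).le
  have hB₀ : 0 ≤ B := (sum_nonneg fun k _ => (hδ k).le).trans hB.le
  simp_rw [hγstar]
  refine ⟨sum_mul_div_sum_le _ _ hB₀, fun γ hγδ hγB => ?_⟩
  have hloss : ∑ k, p k * δ k / (√(p k * δ k) * B / ∑ ℓ, √(p ℓ * δ ℓ))
      ≤ ∑ k, p k * δ k / γ k := by
    rw [sum_div_sqrt_mul_div]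
    exact sq_sum_sqrt_div_le_sum_div _ _ hpδ (fun k _ => (hδ k).trans_le (hγδ k)) hγB
  simp only [mul_one_sub, sum_sub_distrib, mul_div_assoc']
  linarith

/-- Optimal proportional-to-√(pδ) budget allocation over regions. -/
theorem stmt_0 {K : Type*} [Fintype K] (p δ : K → ℝ) (B : ℝ)
    (hp : ∀ k, 0 < p k) (hδ : ∀ k, 0 < δ k)
    (hB : ∑ k, δ k < B)
    (γstar : K → ℝ)
    (hγstar : ∀ k, γstar k = Real.sqrt (p k * δ k) * B / ∑ ℓ, Real.sqrt (p ℓ * δ ℓ))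
    (hfeas : ∀ k, δ k ≤ γstar k) :
    (∑ k, γstar k ≤ B) ∧
    ∀ γ : K → ℝ, (∀ k, δ k ≤ γ k) → (∑ k, γ k ≤ B) →
      ∑ k, p k * (1 - δ k / γ k) ≤ ∑ k, p k * (1 - δ k / γstar k) :=
  stmt_0_general p δ B hp hδ hB γstar hγstar
end

section
/- Let S be a finite nonempty set, p_k, δ_k > 0, L_k > 0 for k ∈ S, and B > Σ_{k∈S} L_k. Let S̃ ⊆ S and define γ*_k = L_k for k ∈ S∖S̃ and γ*_k = √(p_k δ_k)·(B − Σ_{ℓ∈S∖S̃} L_ℓ)/Σ_{ℓ∈S̃} √(p_ℓ δ_ℓ) for k ∈ S̃ (with S̃ nonempty). If γ*_k > L_k for all k ∈ S̃ and √(p_k δ_k / λ) ≤ L_k for all k ∈ S∖S̃ where √λ = Σ_{ℓ∈S̃}√(p_ℓ δ_ℓ)/(B − Σ_{ℓ∈S∖S̃} L_ℓ), then γ* is the unique maximizer of Σ_{k∈S} p_k(1 − δ_k/γ_k) subject to γ_k ≥ L_k for all k ∈ S and Σ_{k∈S} γ_k ≤ B. -/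
/-!
With `λ = sqrtlam ^ 2`, the KKT conditions say that the marginal reward `p k δ k / γ*ₖ²` equals
`λ` on `S̃` and is at most `λ` on `S \ S̃`, where `γ*` sits at its lower bound. Since
`x ↦ p (1 - δ / x)` is strictly concave on `x > 0`, every feasible `γ` satisfies
`p k (1 - δ k / γₖ) ≤ p k (1 - δ k / γ*ₖ) + λ (γₖ - γ*ₖ)`, strictly when `γₖ ≠ γ*ₖ`
(on `S \ S̃` the increment `γₖ - γ*ₖ` is nonnegative). Summing over `S`, the Lagrangian term
`λ (∑ γ - ∑ γ*) = λ (∑ γ - B)` is nonpositive.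
-/

open Finset

section Lagrangian

variable {ι : Type*} {s : Finset ι} {F G x a : ι → ℝ} {lam : ℝ}

lemma sum_add_mul_sub_le_of_sum_le (hlam : 0 ≤ lam) (hxa : ∑ k ∈ s, x k ≤ ∑ k ∈ s, a k) :
    ∑ k ∈ s, (G k + lam * (x k - a k)) ≤ ∑ k ∈ s, G k := by
  rw [sum_add_distrib, ← mul_sum, sum_sub_distrib]
  nlinarith

lemma sum_le_sum_of_le_add_mul_sub (hlam : 0 ≤ lam) (hxa : ∑ k ∈ s, x k ≤ ∑ k ∈ s, a k)
    (h : ∀ k ∈ s, F k ≤ G k + lam * (x k - a k)) :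
    ∑ k ∈ s, F k ≤ ∑ k ∈ s, G k :=
  (sum_le_sum h).trans (sum_add_mul_sub_le_of_sum_le hlam hxa)

lemma sum_lt_sum_of_lt_add_mul_sub (hlam : 0 ≤ lam) (hxa : ∑ k ∈ s, x k ≤ ∑ k ∈ s, a k)
    (h : ∀ k ∈ s, F k ≤ G k + lam * (x k - a k)) (hlt : ∃ k ∈ s, F k < G k + lam * (x k - a k)) :
    ∑ k ∈ s, F k < ∑ k ∈ s, G k :=
  (sum_lt_sum h hlt).trans_le (sum_add_mul_sub_le_of_sum_le hlam hxa)

end Lagrangian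

section Reward

variable {p d a x lam : ℝ}

lemma reward_tangent_sub_reward (ha : a ≠ 0) (hx : x ≠ 0) :
    p * (1 - d / a) + p * d / a ^ 2 * (x - a) - p * (1 - d / x)
      = p * d * (x - a) ^ 2 / (a ^ 2 * x) := by
  field_simp
  ring

lemma reward_lt_add_mul_sub (hpd : 0 < p * d) (ha : 0 < a) (hx : 0 < x) (hxa : x ≠ a)
    (hslope : p * d / a ^ 2 * (x - a) ≤ lam * (x - a)) :
    p * (1 - d / x) < p * (1 - d / a) + lam * (x - a) := by
  have hgap : 0 < p * d * (x - a) ^ 2 / (a ^ 2 * x) := by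
    have := sub_ne_zero.2 hxa
    positivity
  linarith [reward_tangent_sub_reward (p := p) (d := d) ha.ne' hx.ne']

lemma reward_le_add_mul_sub (hpd : 0 < p * d) (ha : 0 < a) (hx : 0 < x)
    (hslope : p * d / a ^ 2 * (x - a) ≤ lam * (x - a)) :
    p * (1 - d / x) ≤ p * (1 - d / a) + lam * (x - a) := by
  rcases eq_or_ne x a with rfl | hxa
  · simp
  · exact (reward_lt_add_mul_sub hpd ha hx hxa hslope).le

end Reward

lemma div_sq_sqrt_div {q : ℝ} (s : ℝ) (hq : 0 < q) : q / (√q / s) ^ 2 = s ^ 2 := by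
  rw [div_pow, Real.sq_sqrt hq.le, div_div_cancel₀ hq.ne']

lemma div_sq_le_sq_of_sqrt_div_le {q s a : ℝ} (hs : 0 < s) (ha : 0 < a) (h : √q / s ≤ a) :
    q / a ^ 2 ≤ s ^ 2 := by
  rw [div_le_iff₀ hs, Real.sqrt_le_left (by positivity)] at h
  rw [div_le_iff₀ (by positivity)]
  linarith [mul_pow a s 2]

lemma sum_eq_sum_sdiff_add_of_proportional {ι : Type*} [DecidableEq ι] {S T : Finset ι}
    {g L w : ι → ℝ} {C : ℝ} (hT : T ⊆ S) (hw : ∑ ℓ ∈ T, w ℓ ≠ 0)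
    (hg₁ : ∀ k ∈ S \ T, g k = L k) (hg₂ : ∀ k ∈ T, g k = w k * C / ∑ ℓ ∈ T, w ℓ) :
    ∑ k ∈ S, g k = ∑ k ∈ S \ T, L k + C := by
  rw [← sum_sdiff hT, sum_congr rfl hg₁, sum_congr rfl hg₂, ← sum_div, ← sum_mul,
    mul_div_cancel_left₀ _ hw]

theorem stmt_6_general {K : Type*} [DecidableEq K]
    (S Stilde : Finset K) (hSt : Stilde ⊆ S) (hStne : Stilde.Nonempty)
    (p δ L : K → ℝ) (B : ℝ)
    (hp : ∀ k ∈ S, 0 < p k) (hδ : ∀ k ∈ S, 0 < δ k) (hL : ∀ k ∈ S, 0 < L k)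
    (C sqrtlam : ℝ)
    (hC : C = B - ∑ ℓ ∈ S \ Stilde, L ℓ)
    (hsqrtlam : sqrtlam = (∑ ℓ ∈ Stilde, Real.sqrt (p ℓ * δ ℓ)) / C)
    (γstar : K → ℝ)
    (hγstar1 : ∀ k ∈ S \ Stilde, γstar k = L k)
    (hγstar2 : ∀ k ∈ Stilde,
      γstar k = Real.sqrt (p k * δ k) * C / ∑ ℓ ∈ Stilde, Real.sqrt (p ℓ * δ ℓ))
    (hint : ∀ k ∈ Stilde, L k < γstar k)
    (hdual : ∀ k ∈ S \ Stilde, Real.sqrt (p k * δ k) / sqrtlam ≤ L k) :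
    ((∀ k ∈ S, L k ≤ γstar k) ∧ ∑ k ∈ S, γstar k ≤ B) ∧
    ∀ γ : K → ℝ, (∀ k ∈ S, L k ≤ γ k) → (∑ k ∈ S, γ k ≤ B) →
      (∑ k ∈ S, p k * (1 - δ k / γ k) ≤ ∑ k ∈ S, p k * (1 - δ k / γstar k)) ∧
      (∑ k ∈ S, p k * (1 - δ k / γ k) = ∑ k ∈ S, p k * (1 - δ k / γstar k) →
        ∀ k ∈ S, γ k = γstar k) := by
  have hpd : ∀ k ∈ S, 0 < p k * δ k := fun k hk => mul_pos (hp k hk) (hδ k hk)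
  have hsqrt : ∀ k ∈ Stilde, 0 < √(p k * δ k) := fun k hk => Real.sqrt_pos.2 (hpd k (hSt hk))
  have hsum_sqrt : 0 < ∑ ℓ ∈ Stilde, √(p ℓ * δ ℓ) := sum_pos hsqrt hStne
  have hC_pos : 0 < C := by
    obtain ⟨k, hk⟩ := hStne
    have := (hL k (hSt hk)).trans (hint k hk)
    rw [hγstar2 k hk, div_pos_iff_of_pos_right hsum_sqrt] at this
    exact pos_of_mul_pos_right this (hsqrt k hk).le
  have hsqrtlam_pos : 0 < sqrtlam := hsqrtlam ▸ div_pos hsum_sqrt hC_pos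
  have hfeas : ∀ k ∈ S, L k ≤ γstar k := fun k hk => by
    by_cases h : k ∈ Stilde
    · exact (hint k h).le
    · exact (hγstar1 k (mem_sdiff.2 ⟨hk, h⟩)).ge
  have hγstar_pos : ∀ k ∈ S, 0 < γstar k := fun k hk => (hL k hk).trans_le (hfeas k hk)
  have hbudget : ∑ k ∈ S, γstar k = B := by
    rw [sum_eq_sum_sdiff_add_of_proportional hSt hsum_sqrt.ne' hγstar1 hγstar2, hC]
    ring
  have hslope : ∀ γ : K → ℝ, (∀ k ∈ S, L k ≤ γ k) → ∀ k ∈ S,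
      p k * δ k / γstar k ^ 2 * (γ k - γstar k) ≤ sqrtlam ^ 2 * (γ k - γstar k) := by
    intro γ hγL k hk
    by_cases h : k ∈ Stilde
    · have hγstar_eq : γstar k = √(p k * δ k) / sqrtlam := by
        rw [hγstar2 k h, hsqrtlam, div_div_eq_mul_div]
      rw [hγstar_eq, div_sq_sqrt_div _ (hpd k hk)]
    · have hk' := mem_sdiff.2 ⟨hk, h⟩
      refine mul_le_mul_of_nonneg_right ?_ (sub_nonneg.2 ((hγstar1 k hk').trans_le (hγL k hk)))
      exact div_sq_le_sq_of_sqrt_div_le hsqrtlam_pos (hγstar_pos k hk)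
        ((hdual k hk').trans_eq (hγstar1 k hk').symm)
  refine ⟨⟨hfeas, hbudget.le⟩, fun γ hγL hγB => ?_⟩
  have hγ_pos : ∀ k ∈ S, 0 < γ k := fun k hk => (hL k hk).trans_le (hγL k hk)
  have hγ_budget : ∑ k ∈ S, γ k ≤ ∑ k ∈ S, γstar k := hbudget ▸ hγB
  have htangent : ∀ k ∈ S, p k * (1 - δ k / γ k)
      ≤ p k * (1 - δ k / γstar k) + sqrtlam ^ 2 * (γ k - γstar k) := fun k hk =>
    reward_le_add_mul_sub (hpd k hk) (hγstar_pos k hk) (hγ_pos k hk) (hslope γ hγL k hk)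
  refine ⟨sum_le_sum_of_le_add_mul_sub (sq_nonneg _) hγ_budget htangent, fun heq => ?_⟩
  by_contra! ⟨k, hk, hne⟩
  refine (sum_lt_sum_of_lt_add_mul_sub (sq_nonneg _) hγ_budget htangent ⟨k, hk, ?_⟩).ne heq
  exact reward_lt_add_mul_sub (hpd k hk) (hγstar_pos k hk) (hγ_pos k hk) hne (hslope γ hγL k hk)

/-- KKT characterization (Proposition 2) of the follower's best response on its
winning set `S`: regions in `S \ S̃` sit at their lower bound, regions in `S̃`
receive budget proportional to √(p δ); under the KKT inequalities this is the
unique maximizer. -/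
theorem stmt_6 {K : Type*} [Fintype K] [DecidableEq K]
    (S Stilde : Finset K) (hSt : Stilde ⊆ S) (hStne : Stilde.Nonempty)
    (p δ L : K → ℝ) (B : ℝ)
    (hp : ∀ k ∈ S, 0 < p k) (hδ : ∀ k ∈ S, 0 < δ k) (hL : ∀ k ∈ S, 0 < L k)
    (hB : ∑ k ∈ S, L k < B)
    (C sqrtlam : ℝ)
    (hC : C = B - ∑ ℓ ∈ S \ Stilde, L ℓ)
    (hsqrtlam : sqrtlam = (∑ ℓ ∈ Stilde, Real.sqrt (p ℓ * δ ℓ)) / C)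
    (γstar : K → ℝ)
    (hγstar1 : ∀ k ∈ S \ Stilde, γstar k = L k)
    (hγstar2 : ∀ k ∈ Stilde,
      γstar k = Real.sqrt (p k * δ k) * C / ∑ ℓ ∈ Stilde, Real.sqrt (p ℓ * δ ℓ))
    (hint : ∀ k ∈ Stilde, L k < γstar k)
    (hdual : ∀ k ∈ S \ Stilde, Real.sqrt (p k * δ k) / sqrtlam ≤ L k) :
    ((∀ k ∈ S, L k ≤ γstar k) ∧ ∑ k ∈ S, γstar k ≤ B) ∧
    ∀ γ : K → ℝ, (∀ k ∈ S, L k ≤ γ k) → (∑ k ∈ S, γ k ≤ B) →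
      (∑ k ∈ S, p k * (1 - δ k / γ k) ≤ ∑ k ∈ S, p k * (1 - δ k / γstar k)) ∧
      (∑ k ∈ S, p k * (1 - δ k / γ k) = ∑ k ∈ S, p k * (1 - δ k / γstar k) →
        ∀ k ∈ S, γ k = γstar k) :=
  stmt_6_general S Stilde hSt hStne p δ L B hp hδ hL C sqrtlam hC hsqrtlam γstar hγstar1 hγstar2
    hint hdual
end
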